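/- Let Ω ⊆ ℝⁿ be a nonempty closed convex set and let F : ℝⁿ → ℝⁿ be continuous and monotone on Ω and coercive with respect to Ω. Then the dual gap function G(x) = sup_{y∈Ω} ⟨F(y), x − y⟩ is finite for every x ∈ Ω, and for every x ∈ Ω the supremum is attained at some ȳ ∈ Ω. -/

import Mathlib

open Set Filter
open scoped InnerProductSpace

/-! On a closed set in a finite-dimensional space a continuous function attains its maximum as soon
as it eventually lies below its value at one point of the set. Coercivity at `x` gives
`⟪F y, y - x⟫ > 0` for all large `y ∈ Ω`, i.e. `y ↦ ⟪F y, x - y⟫` is negative there, while it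
vanishes at `x`. -/

lemma inner_sub_pos_of_coercive {E : Type*} [NormedAddCommGroup E] [InnerProductSpace ℝ E]
    {Ω : Set E} {F : E → E} {x₀ : E} {γ c R : ℝ} (hc : 0 < c)
    (hR : ∀ x ∈ Ω, R ≤ ‖x‖ → c ≤ ⟪F x, x - x₀⟫_ℝ / ‖x‖ ^ γ) {y : E} (hy : y ∈ Ω)
    (hRy : R ≤ ‖y‖) : 0 < ⟪F y, y - x₀⟫_ℝ := by
  by_contra! hnonpos
  have hquot : ⟪F y, y - x₀⟫_ℝ / ‖y‖ ^ γ ≤ 0 :=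
    div_nonpos_of_nonpos_of_nonneg hnonpos (Real.rpow_nonneg (norm_nonneg y) γ)
  linarith [hR y hy hRy]

lemma eventually_inner_sub_nonpos_of_coercive {E : Type*} [NormedAddCommGroup E]
    [InnerProductSpace ℝ E] [ProperSpace E] {Ω : Set E} {F : E → E} {x₀ : E} {γ c R : ℝ}
    (hc : 0 < c) (hR : ∀ x ∈ Ω, R ≤ ‖x‖ → c ≤ ⟪F x, x - x₀⟫_ℝ / ‖x‖ ^ γ) :
    ∀ᶠ y in cocompact E ⊓ 𝓟 Ω, ⟪F y, x₀ - y⟫_ℝ ≤ 0 := by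
  filter_upwards [(tendsto_norm_cocompact_atTop.eventually_ge_atTop R).filter_mono inf_le_left,
    mem_inf_of_right (mem_principal_self Ω)] with y hRy hy
  rw [← neg_sub y x₀, inner_neg_right, neg_nonpos]
  exact (inner_sub_pos_of_coercive hc hR hy hRy).le

theorem dual_gap_finite_and_attained {n : ℕ}
    (Ω : Set (EuclideanSpace ℝ (Fin n)))
    (hcl : IsClosed Ω)
    (F : EuclideanSpace ℝ (Fin n) → EuclideanSpace ℝ (Fin n))
    (hFcont : ContinuousOn F Ω)
    (hcoer : ∃ γ : ℝ, 0 < γ ∧ ∀ x₀ ∈ Ω, ∃ c : ℝ, 0 < c ∧ ∃ R : ℝ,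
      ∀ x ∈ Ω, R ≤ ‖x‖ → c ≤ ⟪F x, x - x₀⟫_ℝ / ‖x‖ ^ γ) :
    ∀ x ∈ Ω,
      BddAbove ((fun y => ⟪F y, x - y⟫_ℝ) '' Ω) ∧
      ∃ ybar ∈ Ω, ∀ y ∈ Ω, ⟪F y, x - y⟫_ℝ ≤ ⟪F ybar, x - ybar⟫_ℝ := by
  intro x hx
  obtain ⟨γ, -, hcoer⟩ := hcoer
  obtain ⟨c, hc, R, hR⟩ := hcoer x hx
  have hcont : ContinuousOn (fun y => ⟪F y, x - y⟫_ℝ) Ω :=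
    hFcont.inner (continuousOn_const.sub continuousOn_id)
  have hlarge : ∀ᶠ y in cocompact _ ⊓ 𝓟 Ω, ⟪F y, x - y⟫_ℝ ≤ ⟪F x, x - x⟫_ℝ := by
    simpa using eventually_inner_sub_nonpos_of_coercive hc hR
  obtain ⟨ybar, hybar, hmax⟩ := hcont.exists_isMaxOn' hcl hx hlarge
  exact ⟨hmax.bddAbove, ybar, hybar, hmax⟩
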